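/- arXiv:1609.03512 — 2 statements merged into one kernel-verified Lean document; each statement's English description precedes it below -/
import Mathlib

section
/- Let n ∈ ℕ, let ω, υ ∈ 𝒫_n be n-cylinders, and let y ∈ T^nω ∩ T^nυ. Suppose that the cones 𝒟^n(ℓ_ω y)𝒦 and 𝒟^n(ℓ_υ y)𝒦 are transversal. Then there exists a 1-dimensional linear subspace L ⊆ ℝ^d such that for every nonzero v ∈ L: |D(τ_n∘ℓ_ω)(y)v − D(τ_n∘ℓ_υ)(y)v| > C₅ ( |Dℓ_ω(y)v| + |Dℓ_υ(y)v| ). -/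
open Set MeasureTheory Metric
open scoped Classical Topology symmDiff

noncomputable section

abbrev Euc (d : ℕ) : Type := EuclideanSpace ℝ (Fin d)

def tauN {d : ℕ} (T : Euc d → Euc d) (τ : Euc d → ℝ) (n : ℕ) (x : Euc d) : ℝ :=
  ∑ j ∈ Finset.range n, τ (T^[j] x)

noncomputable def Jn {d : ℕ} (T : Euc d → Euc d) (n : ℕ) (x : Euc d) : ℝ :=
  |(fderiv ℝ (T^[n]) x).det|⁻¹

def IsCyl {d : ℕ} (P : Finset (Set (Euc d))) (T : Euc d → Euc d) (n : ℕ)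
    (s : Set (Euc d)) : Prop :=
  s.Nonempty ∧ ∃ ω : Fin n → Set (Euc d), (∀ j, ω j ∈ P) ∧
    s = ⋂ j : Fin n, (T^[(j : ℕ)]) ⁻¹' (ω j)

def UnionCyl {d : ℕ} (P : Finset (Set (Euc d))) (T : Euc d → Euc d) (n : ℕ) :
    Set (Euc d) :=
  {x | ∃ s, IsCyl P T n s ∧ x ∈ s}

noncomputable def invBranch {d : ℕ} (T : Euc d → Euc d) (n : ℕ) (ω : Set (Euc d))
    (x : Euc d) : Euc d :=
  if h : ∃ y, y ∈ ω ∧ T^[n] y = x then h.choose else 0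

def coneK (d : ℕ) (c : ℝ) : Set (Euc d × ℝ) := {p | |p.2| ≤ c * ‖p.1‖}

noncomputable def Dmap {d : ℕ} (T : Euc d → Euc d) (τ : Euc d → ℝ) (n : ℕ) (x : Euc d) :
    Euc d × ℝ → Euc d × ℝ :=
  fun p => (fderiv ℝ (T^[n]) x p.1, fderiv ℝ (tauN T τ n) x p.1 + p.2)

def ConesTransversal {d : ℕ} (S₁ S₂ : Set (Euc d × ℝ)) : Prop :=
  ¬ ∃ V : Submodule ℝ (Euc d × ℝ), Module.finrank ℝ V = d ∧ (V : Set (Euc d × ℝ)) ⊆ S₁ ∩ S₂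

def CohomPC {d : ℕ} (P : Finset (Set (Euc d))) (X : Set (Euc d)) (T : Euc d → Euc d)
    (τ : Euc d → ℝ) : Prop :=
  ∃ θ : Euc d → ℝ, ContDiffOn ℝ 1 θ X ∧ ∃ χ : Euc d → ℝ,
    (∀ ω ∈ P, ∃ c, ∀ x ∈ ω, χ x = c) ∧
    ∀ x ∈ ⋃₀ (P : Set (Set (Euc d))), τ x = θ (T x) - θ x + χ x

noncomputable def supNormOn {d : ℕ} {E : Type*} [NormedAddCommGroup E] (S : Set (Euc d))
    (f : Euc d → E) : ℝ :=
  sSup ((fun x => ‖f x‖) '' S)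

noncomputable def holderOn {d : ℕ} {E : Type*} [NormedAddCommGroup E] (α : ℝ)
    (S : Set (Euc d)) (f : Euc d → E) : ℝ :=
  sInf {c | 0 ≤ c ∧ ∀ x ∈ S, ∀ y ∈ S, ‖f x - f y‖ ≤ c * dist x y ^ α}

noncomputable def holderP {d : ℕ} {E : Type*} [NormedAddCommGroup E] (α : ℝ)
    (P : Finset (Set (Euc d))) (f : Euc d → E) : ℝ :=
  sInf {c | 0 ≤ c ∧ ∀ ω ∈ P, ∀ x ∈ ω, ∀ y ∈ ω, ‖f x - f y‖ ≤ c * dist x y ^ α}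

noncomputable def transferTw {d : ℕ} (P : Finset (Set (Euc d))) (T : Euc d → Euc d)
    (τ : Euc d → ℝ) (n : ℕ) (z : ℂ) (f : Euc d → ℂ) (x : Euc d) : ℂ :=
  ∑' y : {y : Euc d // T^[n] y = x ∧ y ∈ UnionCyl P T n},
    Complex.exp (-z * (tauN T τ n y : ℂ)) * f y * (Jn T n y : ℂ)

noncomputable def bNorm {d : ℕ} (α : ℝ) (P : Finset (Set (Euc d))) (S : Set (Euc d))
    (b : ℝ) (f : Euc d → ℂ) : ℝ :=
  (1 + |b| ^ α)⁻¹ * holderP α P f + supNormOn S f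

noncomputable def Kfun {d : ℕ} (T : Euc d → Euc d) (τ : Euc d → ℝ) (n : ℕ) (a : ℝ)
    (f : Euc d → ℂ) (w : Euc d) : ℂ :=
  (Jn T n w : ℂ) * f w * Complex.exp (-(a : ℂ) * (tauN T τ n w : ℂ))

noncomputable def oscTerm {d : ℕ} (T : Euc d → Euc d) (τ : Euc d → ℝ) (n : ℕ) (a b : ℝ)
    (f : Euc d → ℂ) (ρ : Euc d → ℝ) (ω υ : Set (Euc d)) : ℝ :=
  ‖∫ x in (T^[n] '' ω ∩ T^[n] '' υ),
      (ρ x : ℂ) * Kfun T τ n a f (invBranch T n ω x) *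
        (starRingEnd ℂ) (Kfun T τ n a f (invBranch T n υ x)) *
        Complex.exp (Complex.I * (b : ℂ) *
          ((tauN T τ n (invBranch T n ω x) - tauN T τ n (invBranch T n υ x) : ℝ) : ℂ))‖

noncomputable def suspFlow {d : ℕ} (T : Euc d → Euc d) (τ : Euc d → ℝ) (t : ℝ)
    (p : Euc d × ℝ) : Euc d × ℝ :=
  if h : ∃ n, tauN T τ n p.1 ≤ p.2 + t ∧ p.2 + t < tauN T τ (n + 1) p.1 then
    (T^[Nat.find h] p.1, p.2 + t - tauN T τ (Nat.find h) p.1)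
  else p

noncomputable def nuInt {d : ℕ} (ν : Measure (Euc d)) (τ : Euc d → ℝ)
    (h : Euc d × ℝ → ℝ) : ℝ :=
  (∫ x, τ x ∂ν)⁻¹ * ∫ x, (∫ u in (0 : ℝ)..(τ x), h (x, u)) ∂ν

noncomputable def c1NormOn {d : ℕ} (S : Set (Euc d × ℝ)) (f : Euc d × ℝ → ℝ) : ℝ :=
  sSup ((fun p => |f p| + ‖fderiv ℝ f p‖) '' S)

open Pointwise in
theorem exists_linear_between {E : Type*} [AddCommGroup E] [Module ℝ E]
    (r₁ r₂ : E → ℝ)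
    (h10 : r₁ 0 = 0) (h20 : r₂ 0 = 0)
    (h1s : ∀ (c : ℝ) v, r₁ (c • v) = |c| * r₁ v)
    (h2s : ∀ (c : ℝ) v, r₂ (c • v) = |c| * r₂ v)
    (h1a : ∀ u v, r₁ (u + v) ≤ r₁ u + r₁ v)
    (h2a : ∀ u v, r₂ (u + v) ≤ r₂ u + r₂ v)
    (δ : E →ₗ[ℝ] ℝ) (H : ∀ v, |δ v| ≤ r₁ v + r₂ v) :
    ∃ m : E →ₗ[ℝ] ℝ, ∀ v, |m v| ≤ r₁ v ∧ |m v - δ v| ≤ r₂ v := by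
  have h1neg : ∀ v, r₁ (-v) = r₁ v := by
    intro v; rw [← neg_one_smul ℝ v, h1s]; simp
  have h2neg : ∀ v, r₂ (-v) = r₂ v := by
    intro v; rw [← neg_one_smul ℝ v, h2s]; simp
  set S : E → Set ℝ := fun v => range (fun u => r₁ (v - u) + (δ u + r₂ u)) with hS
  have hne : ∀ v, (S v).Nonempty := fun v => ⟨_, ⟨0, rfl⟩⟩
  have hmem : ∀ v u, r₁ (v - u) + (δ u + r₂ u) ∈ S v := fun v u => ⟨u, rfl⟩
  have hge : ∀ v u, -(r₁ v) ≤ r₁ (v - u) + (δ u + r₂ u) := by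
    intro v u
    have h1 : -(r₁ u + r₂ u) ≤ δ u := neg_le_of_abs_le (H u)
    have h2 : r₁ u ≤ r₁ (v - u) + r₁ v := by
      have h := h1a (v - u) (-v)
      have e : v - u + -v = -u := by abel
      rw [e, h1neg, h1neg] at h
      exact h
    linarith
  have hbdd : ∀ v, BddBelow (S v) := by
    intro v
    refine ⟨-(r₁ v), ?_⟩
    rintro a ⟨u, rfl⟩
    exact hge v u
  set q : E → ℝ := fun v => sInf (S v) with hq
  have hq_le₁ : ∀ v, q v ≤ r₁ v := by
    intro v
    have := csInf_le (hbdd v) (hmem v 0)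
    simpa [h20, map_zero] using this
  have hq_le₂ : ∀ v, q v ≤ δ v + r₂ v := by
    intro v
    have := csInf_le (hbdd v) (hmem v v)
    simpa [h10] using this
  have hq_hom : ∀ c : ℝ, 0 < c → ∀ v, q (c • v) = c * q v := by
    intro c hc v
    have key : ∀ w, r₁ (c • v - c • w) + (δ (c • w) + r₂ (c • w))
        = c * (r₁ (v - w) + (δ w + r₂ w)) := by
      intro w
      rw [← smul_sub, h1s, h2s, _root_.map_smul, smul_eq_mul, abs_of_pos hc]
      ring
    have hu : ∀ u : E, c • (c⁻¹ • u) = u := by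
      intro u; rw [smul_smul, mul_inv_cancel₀ hc.ne', one_smul]
    have hset : S (c • v) = c • (S v) := by
      ext a
      constructor
      · rintro ⟨u, rfl⟩
        refine ⟨r₁ (v - c⁻¹ • u) + (δ (c⁻¹ • u) + r₂ (c⁻¹ • u)), ⟨c⁻¹ • u, rfl⟩, ?_⟩
        have h := key (c⁻¹ • u)
        rw [hu u] at h
        dsimp only
        rw [smul_eq_mul]
        exact h.symm
      · rintro ⟨a, ⟨u, rfl⟩, rfl⟩
        refine ⟨c • u, ?_⟩
        dsimp only
        rw [smul_eq_mul]
        exact key u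
    rw [hq]
    simp only
    rw [hset, Real.sInf_smul_of_nonneg hc.le]
    rfl
  have hq_add : ∀ x y, q (x + y) ≤ q x + q y := by
    intro x y
    have key : ∀ a ∈ S x, ∀ b ∈ S y, q (x + y) ≤ a + b := by
      rintro a ⟨u, rfl⟩ b ⟨w, rfl⟩
      dsimp only
      have hm := csInf_le (hbdd (x + y)) (hmem (x + y) (u + w))
      refine hm.trans ?_
      have h1 : r₁ (x + y - (u + w)) ≤ r₁ (x - u) + r₁ (y - w) := by
        have := h1a (x - u) (y - w)
        have e : x + y - (u + w) = (x - u) + (y - w) := by abel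
        rw [e]; exact this
      have h2 : r₂ (u + w) ≤ r₂ u + r₂ w := h2a u w
      have h3 : δ (u + w) = δ u + δ w := map_add δ u w
      linarith
    have step : ∀ b ∈ S y, q (x + y) ≤ q x + b := by
      intro b hb
      have : ∀ a ∈ S x, q (x + y) - b ≤ a := fun a ha => by
        have := key a ha b hb; linarith
      have := le_csInf (hne x) this
      linarith
    have : ∀ b ∈ S y, q (x + y) - q x ≤ b := fun b hb => by linarith [step b hb]
    have := le_csInf (hne y) this
    linarith
  -- Hahn-Banach
  have hq0 : 0 ≤ q 0 := by
    refine le_csInf (hne 0) ?_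
    rintro a ⟨u, rfl⟩
    dsimp only
    have := hge 0 u
    rw [h10] at this
    linarith
  obtain ⟨g, -, hg⟩ := exists_extension_of_le_sublinear ⟨⊥, 0⟩ q hq_hom hq_add
    (fun x => by
      obtain ⟨x, hx⟩ := x
      simp only [Submodule.mem_bot] at hx
      subst hx
      simpa using hq0)
  refine ⟨g, fun v => ?_⟩
  have hpos : g v ≤ r₁ v := (hg v).trans (hq_le₁ v)
  have hneg : g (-v) ≤ r₁ (-v) := (hg (-v)).trans (hq_le₁ (-v))
  rw [map_neg, h1neg] at hneg
  have hpos2 : g v ≤ δ v + r₂ v := (hg v).trans (hq_le₂ v)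
  have hneg2 : g (-v) ≤ δ (-v) + r₂ (-v) := (hg (-v)).trans (hq_le₂ (-v))
  rw [map_neg, map_neg, h2neg] at hneg2
  constructor
  · rw [abs_le]; constructor <;> linarith
  · rw [abs_le]; constructor <;> linarith

theorem stmt8 (d : ℕ) (α lam C₃ : ℝ)
    (hα : 0 < α) (hα1 : α < 1) (hlam : 0 < lam) (hC₃ : 0 < C₃)
    (X : Set (Euc d)) (hXc : IsCompact X) (hXcl : X = closure (interior X))
    (P : Finset (Set (Euc d)))
    (hPX : ∀ ω ∈ P, ω ⊆ X) (hPo : ∀ ω ∈ P, IsOpen ω) (hPcon : ∀ ω ∈ P, IsConnected ω)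
    (hPd : ∀ ω ∈ P, ∀ υ ∈ P, ω ≠ υ → Disjoint ω υ)
    (hPf : volume (X \ ⋃₀ (P : Set (Set (Euc d)))) = 0)
    (T : Euc d → Euc d) (hTX : Set.MapsTo T X X)
    (hTdiff : ∀ ω ∈ P, Set.InjOn T ω ∧ ContDiffOn ℝ 1 T ω)
    (hexp : ∀ (n : ℕ) (x : Euc d), (∀ j < n, T^[j] x ∈ ⋃₀ (P : Set (Set (Euc d)))) →
      ∀ v : Euc d, ‖v‖ ≤ Real.exp (-(lam * n)) * ‖fderiv ℝ (T^[n]) x v‖)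
    (τ : Euc d → ℝ) (hτr : ∀ x ∈ X, τ x ∈ Set.Ioc (0 : ℝ) 1)
    (hτC : ∀ ω ∈ P, ContDiffOn ℝ 1 τ ω ∧ ∃ H : ℝ, ∀ x ∈ ω, ∀ y ∈ ω,
      ‖fderiv ℝ τ x - fderiv ℝ τ y‖ ≤ H * dist x y ^ α)
    (hτT : ∀ x ∈ ⋃₀ (P : Set (Set (Euc d))), ∀ v : Euc d,
      |fderiv ℝ τ x v| ≤ C₃ * ‖fderiv ℝ T x v‖) :
    ∀ C₅ : ℝ, C₅ = 2 * C₃ / (1 - Real.exp (-lam)) →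
    ∀ (n : ℕ) (ω υ : Set (Euc d)), IsCyl P T n ω → IsCyl P T n υ →
      ∀ x₁ ∈ ω, ∀ x₂ ∈ υ, T^[n] x₁ = T^[n] x₂ →
      ConesTransversal (Dmap T τ n x₁ '' coneK d C₅) (Dmap T τ n x₂ '' coneK d C₅) →
      ∃ L : Submodule ℝ (Euc d), Module.finrank ℝ L = 1 ∧
        ∀ v ∈ L, v ≠ 0 → ∀ w₁ w₂ : Euc d,
          fderiv ℝ (T^[n]) x₁ w₁ = v → fderiv ℝ (T^[n]) x₂ w₂ = v →
          C₅ * (‖w₁‖ + ‖w₂‖) <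
            |fderiv ℝ (tauN T τ n) x₁ w₁ - fderiv ℝ (tauN T τ n) x₂ w₂| := by
  intro C₅ hC₅ n ω υ hω hυ x₁ hx₁ x₂ hx₂ hTx hTrans
  -- C₅ > 0
  have hexplt : Real.exp (-lam) < 1 := Real.exp_lt_one_iff.mpr (by linarith)
  have hC₅pos : 0 < C₅ := by
    have h1 : 0 < 1 - Real.exp (-lam) := by linarith
    rw [hC₅]; positivity
  -- orbits stay in the partition
  have horb : ∀ (s : Set (Euc d)), IsCyl P T n s → ∀ x ∈ s,
      ∀ j < n, T^[j] x ∈ ⋃₀ (P : Set (Set (Euc d))) := by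
    rintro s ⟨-, ωs, hωs, rfl⟩ x hx j hj
    have := Set.mem_iInter.mp hx ⟨j, hj⟩
    exact ⟨ωs ⟨j, hj⟩, hωs _, this⟩
  set A₁ := fderiv ℝ (T^[n]) x₁ with hA₁
  set A₂ := fderiv ℝ (T^[n]) x₂ with hA₂
  set φ₁ := fderiv ℝ (tauN T τ n) x₁ with hφ₁
  set φ₂ := fderiv ℝ (tauN T τ n) x₂ with hφ₂
  have hinj : ∀ (x : Euc d), (∀ j < n, T^[j] x ∈ ⋃₀ (P : Set (Set (Euc d)))) →
      Function.Injective (fderiv ℝ (T^[n]) x) := by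
    intro x hx a b hab
    have h := hexp n x hx (a - b)
    rw [map_sub, hab, sub_self, norm_zero, mul_zero] at h
    have : ‖a - b‖ = 0 := le_antisymm h (norm_nonneg _)
    rwa [norm_sub_eq_zero_iff] at this
  have hinj₁ : Function.Injective A₁ := hinj x₁ (horb ω hω x₁ hx₁)
  have hinj₂ : Function.Injective A₂ := hinj x₂ (horb υ hυ x₂ hx₂)
  -- invertible linear equivalences
  set e₁ : Euc d ≃ₗ[ℝ] Euc d :=
    LinearMap.linearEquivOfInjective (A₁ : Euc d →ₗ[ℝ] Euc d) hinj₁ rfl with he₁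
  set e₂ : Euc d ≃ₗ[ℝ] Euc d :=
    LinearMap.linearEquivOfInjective (A₂ : Euc d →ₗ[ℝ] Euc d) hinj₂ rfl with he₂
  have he₁app : ∀ v, A₁ (e₁.symm v) = v := fun v => e₁.apply_symm_apply v
  have he₂app : ∀ v, A₂ (e₂.symm v) = v := fun v => e₂.apply_symm_apply v
  set r₁ : Euc d → ℝ := fun v => C₅ * ‖e₁.symm v‖ with hr₁
  set r₂ : Euc d → ℝ := fun v => C₅ * ‖e₂.symm v‖ with hr₂
  set δ : Euc d →ₗ[ℝ] ℝ :=
    ((φ₂ : Euc d →ₗ[ℝ] ℝ) ∘ₗ (e₂.symm : Euc d →ₗ[ℝ] Euc d))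
      - ((φ₁ : Euc d →ₗ[ℝ] ℝ) ∘ₗ (e₁.symm : Euc d →ₗ[ℝ] Euc d)) with hδ
  have hδapp : ∀ v, δ v = φ₂ (e₂.symm v) - φ₁ (e₁.symm v) := fun v => rfl
  by_contra hcon
  push_neg at hcon
  -- derive the pointwise bound
  have H : ∀ v, |δ v| ≤ r₁ v + r₂ v := by
    intro v
    rcases eq_or_ne v 0 with rfl | hv
    · simp [hδapp, hr₁, hr₂]
    obtain ⟨v', hv'L, hv'0, w₁, w₂, h1, h2, hle⟩ :=
      hcon (Submodule.span ℝ {v}) (finrank_span_singleton hv)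
    obtain ⟨c, rfl⟩ := Submodule.mem_span_singleton.mp hv'L
    have hc : c ≠ 0 := by
      rintro rfl; simp at hv'0
    have hw₁ : w₁ = e₁.symm (c • v) := hinj₁ (by rw [h1, he₁app])
    have hw₂ : w₂ = e₂.symm (c • v) := hinj₂ (by rw [h2, he₂app])
    have hineq : |δ (c • v)| ≤ r₁ (c • v) + r₂ (c • v) := by
      rw [hδapp, hr₁, hr₂]
      calc |φ₂ (e₂.symm (c • v)) - φ₁ (e₁.symm (c • v))|
          = |φ₁ w₁ - φ₂ w₂| := by rw [hw₁, hw₂, abs_sub_comm]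
        _ ≤ C₅ * (‖w₁‖ + ‖w₂‖) := hle
        _ = C₅ * ‖e₁.symm (c • v)‖ + C₅ * ‖e₂.symm (c • v)‖ := by
            rw [hw₁, hw₂]; ring
    rw [_root_.map_smul, smul_eq_mul, abs_mul] at hineq
    have hs₁ : r₁ (c • v) = |c| * r₁ v := by
      rw [hr₁]; simp only [_root_.map_smul, norm_smul, Real.norm_eq_abs]; ring
    have hs₂ : r₂ (c • v) = |c| * r₂ v := by
      rw [hr₂]; simp only [_root_.map_smul, norm_smul, Real.norm_eq_abs]; ring
    rw [hs₁, hs₂, ← mul_add] at hineq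
    have hcpos : 0 < |c| := abs_pos.mpr hc
    exact le_of_mul_le_mul_left hineq hcpos
  -- linear selection
  obtain ⟨m, hm⟩ := exists_linear_between r₁ r₂
    (by simp [hr₁]) (by simp [hr₂])
    (fun c v => by simp only [hr₁, _root_.map_smul, norm_smul, Real.norm_eq_abs]; ring)
    (fun c v => by simp only [hr₂, _root_.map_smul, norm_smul, Real.norm_eq_abs]; ring)
    (fun u v => by
      simp only [hr₁, map_add]
      calc C₅ * ‖e₁.symm u + e₁.symm v‖ ≤ C₅ * (‖e₁.symm u‖ + ‖e₁.symm v‖) := by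
            gcongr; exact norm_add_le _ _
        _ = C₅ * ‖e₁.symm u‖ + C₅ * ‖e₁.symm v‖ := by ring)
    (fun u v => by
      simp only [hr₂, map_add]
      calc C₅ * ‖e₂.symm u + e₂.symm v‖ ≤ C₅ * (‖e₂.symm u‖ + ‖e₂.symm v‖) := by
            gcongr; exact norm_add_le _ _
        _ = C₅ * ‖e₂.symm u‖ + C₅ * ‖e₂.symm v‖ := by ring)
    δ H
  -- build the d-dimensional subspace
  set ψ₁ : Euc d →ₗ[ℝ] ℝ := (φ₁ : Euc d →ₗ[ℝ] ℝ) ∘ₗ (e₁.symm : Euc d →ₗ[ℝ] Euc d) with hψ₁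
  set G : Euc d →ₗ[ℝ] Euc d × ℝ := LinearMap.prod LinearMap.id (ψ₁ + m) with hG
  have hGinj : Function.Injective G := by
    intro a b hab
    exact congrArg Prod.fst hab
  refine hTrans ⟨LinearMap.range G, ?_, ?_⟩
  · rw [LinearMap.finrank_range_of_inj hGinj]
    simp [finrank_euclideanSpace_fin]
  · rintro p ⟨v, rfl⟩
    have hGv : G v = (v, φ₁ (e₁.symm v) + m v) := rfl
    constructor
    · refine ⟨(e₁.symm v, m v), ?_, ?_⟩
      · show |m v| ≤ C₅ * ‖e₁.symm v‖
        exact (hm v).1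
      · show (A₁ (e₁.symm v), φ₁ (e₁.symm v) + m v) = G v
        rw [he₁app, hGv]
    · refine ⟨(e₂.symm v, φ₁ (e₁.symm v) + m v - φ₂ (e₂.symm v)), ?_, ?_⟩
      · show |φ₁ (e₁.symm v) + m v - φ₂ (e₂.symm v)| ≤ C₅ * ‖e₂.symm v‖
        have := (hm v).2
        rw [hδapp] at this
        have e : φ₁ (e₁.symm v) + m v - φ₂ (e₂.symm v)
            = m v - (φ₂ (e₂.symm v) - φ₁ (e₁.symm v)) := by ring
        rw [e]
        exact this
      · show (A₂ (e₂.symm v), φ₂ (e₂.symm v) + (φ₁ (e₁.symm v) + m v - φ₂ (e₂.symm v))) = G v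
        rw [he₂app, hGv]
        congr 1
        ring

end
end

section
/- Let α ∈ (0,1], H ≥ 0 and let h : ℝ → ℝ satisfy |h(x) − h(y)| ≤ H |x − y|^α for all x, y ∈ ℝ. Then for every b > 1 there exists a C¹ function g : ℝ → ℝ such that sup_{x∈ℝ} |g(x) − h(x)| ≤ H b^{−α} and sup_{x∈ℝ} |g'(x)| ≤ 2 H b^{1−α}. -/
open Set MeasureTheory Metric
open scoped Classical Topology

noncomputable section

theorem stmt17 (α H : ℝ) (hα : 0 < α) (hα1 : α ≤ 1) (hH : 0 ≤ H)
    (h : ℝ → ℝ) (hh : ∀ x y : ℝ, |h x - h y| ≤ H * |x - y| ^ α)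
    (b : ℝ) (hb : 1 < b) :
    ∃ g : ℝ → ℝ, ContDiff ℝ 1 g ∧ (∀ x, |g x - h x| ≤ H * b ^ (-α)) ∧
      ∀ x, |deriv g x| ≤ 2 * H * b ^ (1 - α) := by
  have hb0 : (0:ℝ) < b := lt_trans one_pos hb
  -- continuity of h
  have hc : Continuous h := by
    rw [continuous_iff_continuousAt]
    intro x
    rw [ContinuousAt, tendsto_iff_dist_tendsto_zero]
    have hbound : Continuous fun y : ℝ => H * |y - x| ^ α :=
      continuous_const.mul (((continuous_id.sub continuous_const).abs).rpow_const
        fun _ => Or.inr hα.le)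
    have h0 : Filter.Tendsto (fun y : ℝ => H * |y - x| ^ α) (𝓝 x) (𝓝 0) := by
      have := hbound.tendsto x
      simpa [Real.zero_rpow hα.ne'] using this
    refine squeeze_zero (fun y => dist_nonneg) (fun y => ?_) h0
    simpa [Real.dist_eq] using hh y x
  set F : ℝ → ℝ := fun x => ∫ t in (0:ℝ)..x, h t with hF
  have hFd : ∀ x, HasDerivAt F (h x) x := fun x =>
    (hc.integral_hasStrictDerivAt 0 x).hasDerivAt
  set g : ℝ → ℝ := fun x => b * (F (x + 1/b) - F x) with hg
  have hgd : ∀ x, HasDerivAt g (b * (h (x + 1/b) - h x)) x := by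
    intro x
    have h1 : HasDerivAt (fun y => F (y + 1/b)) (h (x + 1/b)) x := by
      have := ((hFd (x + 1/b)).comp x ((hasDerivAt_id x).add_const (1/b)))
      simpa [Function.comp_def] using this
    exact ((h1.sub (hFd x)).const_mul b)
  have hderiv : ∀ x, deriv g x = b * (h (x + 1/b) - h x) := fun x => (hgd x).deriv
  have key : ∀ x y : ℝ, |x - y| ≤ 1/b → |h x - h y| ≤ H * b ^ (-α) := by
    intro x y hxy
    refine (hh x y).trans ?_
    gcongr
    calc |x - y| ^ α ≤ (1/b) ^ α :=
          Real.rpow_le_rpow (abs_nonneg _) hxy hα.le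
      _ = b ^ (-α) := by
          rw [one_div, Real.inv_rpow hb0.le, ← Real.rpow_neg hb0.le]
  refine ⟨g, ?_, ?_, ?_⟩
  · rw [contDiff_one_iff_deriv]
    constructor
    · exact fun x => (hgd x).differentiableAt
    · have : (deriv g) = fun x => b * (h (x + 1/b) - h x) := funext hderiv
      rw [this]
      exact continuous_const.mul ((hc.comp (continuous_id.add continuous_const)).sub hc)
  · intro x
    have hdiff : g x - h x = b * ∫ t in x..(x + 1/b), (h t - h x) := by
      have hsplit : F (x + 1/b) - F x = ∫ t in x..(x + 1/b), h t := by
        have h3 : (∫ t in (0:ℝ)..x, h t) + (∫ t in x..(x + 1/b), h t)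
            = ∫ t in (0:ℝ)..(x + 1/b), h t :=
          intervalIntegral.integral_add_adjacent_intervals
            (hc.intervalIntegrable 0 x) (hc.intervalIntegrable x (x + 1/b))
        simp only [hF]
        linarith
      rw [hg]
      simp only [hsplit]
      rw [intervalIntegral.integral_sub (hc.intervalIntegrable _ _)
        ((continuous_const : Continuous fun _ : ℝ => h x).intervalIntegrable _ _)]
      rw [intervalIntegral.integral_const]
      have : x + 1/b - x = 1/b := by ring
      rw [this]
      field_simp
      ring_nf
      rw [mul_inv_cancel₀ hb0.ne']
      ring
    rw [hdiff, abs_mul, abs_of_pos hb0]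
    have hle : x ≤ x + 1/b := by
      have : (0:ℝ) < 1/b := by positivity
      linarith
    have hint : |∫ t in x..(x + 1/b), (h t - h x)| ≤ H * b ^ (-α) * |x + 1/b - x| := by
      rw [← Real.norm_eq_abs]
      apply intervalIntegral.norm_integral_le_of_norm_le_const
      intro t ht
      rw [uIoc_of_le hle] at ht
      have : |t - x| ≤ 1/b := by
        rw [abs_of_nonneg (by linarith [ht.1])]
        linarith [ht.2]
      rw [Real.norm_eq_abs]
      simpa using key t x this
    have h2 : |x + 1/b - x| = 1/b := by
      rw [show x + 1/b - x = 1/b by ring, abs_of_pos (by positivity)]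
    rw [h2] at hint
    calc b * |∫ t in x..(x + 1/b), (h t - h x)| ≤ b * (H * b ^ (-α) * (1/b)) := by
          gcongr
      _ = H * b ^ (-α) := by field_simp
  · intro x
    rw [hderiv, abs_mul, abs_of_pos hb0]
    have := key (x + 1/b) x (by rw [show x + 1/b - x = 1/b by ring]; rw [abs_of_pos (by positivity)])
    calc b * |h (x + 1/b) - h x| ≤ b * (H * b ^ (-α)) := by gcongr
      _ = H * b ^ (1-α) := by
          rw [show (1:ℝ) - α = 1 + (-α) by ring, Real.rpow_add hb0, Real.rpow_one]
          ring
      _ ≤ 2 * H * b ^ (1-α) := by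
          have : (0:ℝ) ≤ b ^ (1-α) := (Real.rpow_pos_of_pos hb0 _).le
          nlinarith

end
end
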